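/- arXiv:2003.05165 — 2 statements merged into one kernel-verified Lean document; each statement's English description precedes it below -/
import Mathlib

section
/- Let Λ be a nontrivial chain transitive compact invariant set of a flow φ_t on a compact Riemannian manifold, and let σ ∈ Λ be a hyperbolic singularity of the generating vector field. Then the stable manifold of σ meets Λ at some point other than σ, and the unstable manifold of σ meets Λ at some point other than σ. -/
/- Common setting: the compact manifold is modelled by a finite-dimensional real
inner product space `E`; a `FlowPkg` packages a `C¹` vector field `X`, its flow `φ`,
the tangent flow `Dφ` and the derivative `DX` of the vector field. -/

open scoped RealInnerProductSpace

section Defs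

variable (E : Type*) [NormedAddCommGroup E] [InnerProductSpace ℝ E] [FiniteDimensional ℝ E]

structure FlowPkg where
  X : E → E
  DX : E → E →L[ℝ] E
  φ : ℝ → E → E
  Dφ : ℝ → E → E →L[ℝ] E
  contX : Continuous X
  contφ : Continuous fun p : ℝ × E => φ p.1 p.2
  flow_zero : ∀ x, φ 0 x = x
  flow_add : ∀ s t x, φ (s + t) x = φ s (φ t x)
  deriv_time : ∀ t x, HasDerivAt (fun s => φ s x) (X (φ t x)) t
  deriv_space : ∀ t x, HasFDerivAt (φ t) (Dφ t x) x
  deriv_X : ∀ x, HasFDerivAt X (DX x) x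

end Defs

variable {E : Type*} [NormedAddCommGroup E] [InnerProductSpace ℝ E] [FiniteDimensional ℝ E]

/-- normalization of a vector -/
noncomputable def nrm (v : E) : E := ‖v‖⁻¹ • v

/-- area of the parallelogram spanned by two vectors (norm of `u ∧ v`) -/
noncomputable def area (u v : E) : ℝ := Real.sqrt (‖u‖ ^ 2 * ‖v‖ ^ 2 - ⟪u, v⟫ ^ 2)

namespace FlowPkg

variable (P : FlowPkg E)

def Invariant (Λ : Set E) : Prop := ∀ t : ℝ, ∀ x ∈ Λ, P.φ t x ∈ Λ

def orbit (x : E) : Set E := Set.range fun t : ℝ => P.φ t x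

/-- `Λ` is nontrivial if it is not a single orbit -/
def NontrivialSet (Λ : Set E) : Prop := ¬ ∃ x : E, Λ = P.orbit x

/-- a finite `δ`-pseudo orbit `(x i, T i)`, `0 ≤ i ≤ n`, all times `≥ 1` -/
def IsPseudoOrbit (δ : ℝ) (n : ℕ) (x : ℕ → E) (T : ℕ → ℝ) : Prop :=
  (∀ i < n, 1 ≤ T i) ∧ ∀ i < n, dist (P.φ (T i) (x i)) (x (i + 1)) < δ

/-- a `δ`-pseudo orbit from `a` to `b` -/
def ChainFrom (a b : E) : Prop :=
  ∀ δ > (0:ℝ), ∃ n : ℕ, ∃ x : ℕ → E, ∃ T : ℕ → ℝ,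
    0 < n ∧ P.IsPseudoOrbit δ n x T ∧ x 0 = a ∧ x n = b

def ChainTransitive (Λ : Set E) : Prop :=
  ∀ a ∈ Λ, ∀ b ∈ Λ, ∀ δ > (0:ℝ), ∃ n : ℕ, ∃ x : ℕ → E, ∃ T : ℕ → ℝ,
    0 < n ∧ P.IsPseudoOrbit δ n x T ∧ (∀ i ≤ n, x i ∈ Λ) ∧ x 0 = a ∧ x n = b

/-- the chain recurrent set -/
def CR : Set E := {x | P.ChainFrom x x}

/-- the chain class of a point -/
def ChainClass (σ : E) : Set E := {x | P.ChainFrom σ x ∧ P.ChainFrom x σ}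

/-- the orbit of `z` `ε`-shadows (with an increasing reparametrization `θ`) the
bi-infinite pseudo orbit `(x i)` with accumulated times `s i`. -/
def Shadows (ε : ℝ) (x : ℤ → E) (s : ℤ → ℝ) (z : E) : Prop :=
  ∃ θ : ℝ → ℝ, StrictMono θ ∧ Function.Surjective θ ∧
    ∀ i : ℤ, ∀ t ∈ Set.Icc (s i) (s (i + 1)),
      dist (P.φ (t - s i) (x i)) (P.φ (θ t) z) < ε

/-- the shadowing property on `Λ` -/
def ShadowingOn (Λ : Set E) : Prop :=
  ∀ ε > (0:ℝ), ∃ δ > (0:ℝ), ∀ (x : ℤ → E) (T s : ℤ → ℝ),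
    (∀ i, x i ∈ Λ) → (∀ i, 1 ≤ T i) →
    (∀ i, dist (P.φ (T i) (x i)) (x (i + 1)) < δ) →
    s 0 = 0 → (∀ i, s (i + 1) = s i + T i) →
    ∃ z : E, P.Shadows ε x s z

/-- the intrinsic shadowing property on `Λ`: the shadowing point lies in `Λ` -/
def IntrinsicShadowingOn (Λ : Set E) : Prop :=
  ∀ ε > (0:ℝ), ∃ δ > (0:ℝ), ∀ (x : ℤ → E) (T s : ℤ → ℝ),
    (∀ i, x i ∈ Λ) → (∀ i, 1 ≤ T i) →
    (∀ i, dist (P.φ (T i) (x i)) (x (i + 1)) < δ) →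
    s 0 = 0 → (∀ i, s (i + 1) = s i + T i) →
    ∃ z ∈ Λ, P.Shadows ε x s z

/-- the stable set (stable manifold) of `σ` -/
def Ws (σ : E) : Set E :=
  {x | Filter.Tendsto (fun t : ℝ => P.φ t x) Filter.atTop (nhds σ)}

/-- the unstable set (unstable manifold) of `σ` -/
def Wu (σ : E) : Set E :=
  {x | Filter.Tendsto (fun t : ℝ => P.φ t x) Filter.atBot (nhds σ)}

/-- the strong stable manifold of a singularity `σ`, of contraction rates `< rate`:
points converging to `σ` strictly faster than `e^{rate·t}`. -/
def WssMan (σ : E) (rate : ℝ) : Set E :=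
  {x | ∃ K > (0:ℝ), ∃ r < rate, ∀ t ≥ (0:ℝ), dist (P.φ t x) σ ≤ K * Real.exp (r * t)}

/-- the nonwandering set -/
def NonWandering : Set E :=
  {x | ∀ U ∈ nhds x, ∀ T : ℝ, ∃ t ≥ T, ((P.φ t '' U) ∩ U).Nonempty}

/-- the linear Poincaré flow along the orbit of a regular point `x` -/
noncomputable def psiL (t : ℝ) (x : E) (v : E) : E :=
  P.Dφ t x v - ⟪P.Dφ t x v, nrm (P.X (P.φ t x))⟫ • nrm (P.X (P.φ t x))

/-- the flow induced on the unit sphere bundle by the tangent flow -/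
noncomputable def phiSharp (t : ℝ) (p : E × E) : E × E :=
  (P.φ t p.1, nrm (P.Dφ t p.1 p.2))

/-- the extended linear Poincaré flow on the normal bundle over the sphere bundle -/
noncomputable def psiE (t : ℝ) (p : E × E) (v : E) : E :=
  P.Dφ t p.1 v - ⟪P.Dφ t p.1 v, nrm (P.Dφ t p.1 p.2)⟫ • nrm (P.Dφ t p.1 p.2)

end FlowPkg

/-- a hyperbolic singularity, with its hyperbolic splitting `Es ⊕ Eu` -/
structure HypSing (P : FlowPkg E) (σ : E) where
  Es : Submodule ℝ E
  Eu : Submodule ℝ E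
  zero : P.X σ = 0
  compl : IsCompl Es Eu
  invs : ∀ t : ℝ, ∀ v ∈ Es, P.Dφ t σ v ∈ Es
  invu : ∀ t : ℝ, ∀ v ∈ Eu, P.Dφ t σ v ∈ Eu
  C : ℝ
  lam : ℝ
  hC : 1 ≤ C
  hlam : 0 < lam
  contr : ∀ t ≥ (0:ℝ), ∀ v ∈ Es, ‖P.Dφ t σ v‖ ≤ C * Real.exp (-lam * t) * ‖v‖
  expand : ∀ t ≥ (0:ℝ), ∀ v ∈ Eu, ‖P.Dφ (-t) σ v‖ ≤ C * Real.exp (-lam * t) * ‖v‖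

/-- a hyperbolic periodic orbit through `p` of period `T` -/
structure HypPer (P : FlowPkg E) (p : E) (T : ℝ) where
  hT : 0 < T
  per : P.φ T p = p
  reg : P.X p ≠ 0
  Es : Submodule ℝ E
  Eu : Submodule ℝ E
  compl : Es ⊔ Submodule.span ℝ {P.X p} ⊔ Eu = ⊤
  indep1 : Es ⊓ (Submodule.span ℝ {P.X p} ⊔ Eu) = ⊥
  indep2 : Submodule.span ℝ {P.X p} ⊓ Eu = ⊥
  invs : ∀ v ∈ Es, P.Dφ T p v ∈ Es
  invu : ∀ v ∈ Eu, P.Dφ T p v ∈ Eu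
  C : ℝ
  lam : ℝ
  hC : 1 ≤ C
  hlam : 0 < lam
  contr : ∀ n : ℕ, ∀ v ∈ Es, ‖P.Dφ (n * T) p v‖ ≤ C * Real.exp (-lam * n) * ‖v‖
  expand : ∀ n : ℕ, ∀ v ∈ Eu, ‖P.Dφ (-(n * T)) p v‖ ≤ C * Real.exp (-lam * n) * ‖v‖

/-- positively singular hyperbolic set: dominated splitting `Ess ⊕ Ecu` of the
tangent bundle over `Λ`, `Ess` contracting, `Ecu` area-expanding, all
singularities hyperbolic. -/
structure PosSingHyp (P : FlowPkg E) (Λ : Set E) where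
  Ess : E → Submodule ℝ E
  Ecu : E → Submodule ℝ E
  compl : ∀ x ∈ Λ, IsCompl (Ess x) (Ecu x)
  invs : ∀ t : ℝ, ∀ x ∈ Λ, ∀ v ∈ Ess x, P.Dφ t x v ∈ Ess (P.φ t x)
  invu : ∀ t : ℝ, ∀ x ∈ Λ, ∀ v ∈ Ecu x, P.Dφ t x v ∈ Ecu (P.φ t x)
  C : ℝ
  lam : ℝ
  hC : 1 < C
  hlam : 0 < lam
  dom : ∀ t ≥ (0:ℝ), ∀ x ∈ Λ, ∀ u ∈ Ess x, ∀ v ∈ Ecu (P.φ t x),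
    ‖P.Dφ t x u‖ * ‖P.Dφ (-t) (P.φ t x) v‖ ≤ C * Real.exp (-lam * t) * (‖u‖ * ‖v‖)
  contr : ∀ t ≥ (0:ℝ), ∀ x ∈ Λ, ∀ v ∈ Ess x,
    ‖P.Dφ t x v‖ ≤ C * Real.exp (-lam * t) * ‖v‖
  area_exp : ∀ t ≥ (0:ℝ), ∀ x ∈ Λ, ∀ u ∈ Ecu x, ∀ v ∈ Ecu x,
    area (P.Dφ (-t) x u) (P.Dφ (-t) x v) ≤ C * Real.exp (-lam * t) * area u v
  singHyp : ∀ σ ∈ Λ, P.X σ = 0 → Nonempty (HypSing P σ)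

/-- negatively singular hyperbolic set (positively singular hyperbolic for `-X`) -/
structure NegSingHyp (P : FlowPkg E) (Λ : Set E) where
  Euu : E → Submodule ℝ E
  Ecs : E → Submodule ℝ E
  compl : ∀ x ∈ Λ, IsCompl (Euu x) (Ecs x)
  invs : ∀ t : ℝ, ∀ x ∈ Λ, ∀ v ∈ Euu x, P.Dφ t x v ∈ Euu (P.φ t x)
  invu : ∀ t : ℝ, ∀ x ∈ Λ, ∀ v ∈ Ecs x, P.Dφ t x v ∈ Ecs (P.φ t x)
  C : ℝ
  lam : ℝ
  hC : 1 < C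
  hlam : 0 < lam
  dom : ∀ t ≥ (0:ℝ), ∀ x ∈ Λ, ∀ u ∈ Euu x, ∀ v ∈ Ecs (P.φ (-t) x),
    ‖P.Dφ (-t) x u‖ * ‖P.Dφ t (P.φ (-t) x) v‖ ≤ C * Real.exp (-lam * t) * (‖u‖ * ‖v‖)
  contr : ∀ t ≥ (0:ℝ), ∀ x ∈ Λ, ∀ v ∈ Euu x,
    ‖P.Dφ (-t) x v‖ ≤ C * Real.exp (-lam * t) * ‖v‖
  area_exp : ∀ t ≥ (0:ℝ), ∀ x ∈ Λ, ∀ u ∈ Ecs x, ∀ v ∈ Ecs x,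
    area (P.Dφ t x u) (P.Dφ t x v) ≤ C * Real.exp (-lam * t) * area u v
  singHyp : ∀ σ ∈ Λ, P.X σ = 0 → Nonempty (HypSing P σ)

/-- singular hyperbolic: positively singular hyperbolic for `X` or for `-X` -/
def SingularHyperbolicOn (P : FlowPkg E) (Λ : Set E) : Prop :=
  Nonempty (PosSingHyp P Λ) ∨ Nonempty (NegSingHyp P Λ)

/-- a hyperbolic set: splitting `Es ⊕ ⟨X⟩ ⊕ Eu` with `Es` contracting and `Eu` expanding -/
structure HyperbolicSet (P : FlowPkg E) (Λ : Set E) where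
  Es : E → Submodule ℝ E
  Eu : E → Submodule ℝ E
  compl : ∀ x ∈ Λ, Es x ⊔ Submodule.span ℝ {P.X x} ⊔ Eu x = ⊤
  indep1 : ∀ x ∈ Λ, Es x ⊓ (Submodule.span ℝ {P.X x} ⊔ Eu x) = ⊥
  indep2 : ∀ x ∈ Λ, Submodule.span ℝ {P.X x} ⊓ Eu x = ⊥
  invs : ∀ t : ℝ, ∀ x ∈ Λ, ∀ v ∈ Es x, P.Dφ t x v ∈ Es (P.φ t x)
  invu : ∀ t : ℝ, ∀ x ∈ Λ, ∀ v ∈ Eu x, P.Dφ t x v ∈ Eu (P.φ t x)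
  C : ℝ
  lam : ℝ
  hC : 1 ≤ C
  hlam : 0 < lam
  contr : ∀ t ≥ (0:ℝ), ∀ x ∈ Λ, ∀ v ∈ Es x,
    ‖P.Dφ t x v‖ ≤ C * Real.exp (-lam * t) * ‖v‖
  expand : ∀ t ≥ (0:ℝ), ∀ x ∈ Λ, ∀ v ∈ Eu x,
    ‖P.Dφ (-t) x v‖ ≤ C * Real.exp (-lam * t) * ‖v‖

/-- `C¹` closeness of two vector fields -/
def C1Close (P Q : FlowPkg E) (ε : ℝ) : Prop :=
  ∀ x : E, ‖Q.X x - P.X x‖ + ‖Q.DX x - P.DX x‖ < ε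

/-- a star vector field: all critical elements of all `C¹`-nearby vector fields
are hyperbolic -/
def FlowPkg.Star (P : FlowPkg E) : Prop :=
  ∃ ε > (0:ℝ), ∀ Q : FlowPkg E, C1Close P Q ε →
    (∀ σ : E, Q.X σ = 0 → Nonempty (HypSing Q σ)) ∧
    (∀ p : E, ∀ T : ℝ, 0 < T → Q.φ T p = p → Q.X p ≠ 0 → Nonempty (HypPer Q p T))

/-- a preperiodic point: accumulated by periodic points of `C¹`-nearby vector fields -/
def FlowPkg.PreperiodicPt (P : FlowPkg E) (x : E) : Prop :=
  ∀ ε > (0:ℝ), ∃ Q : FlowPkg E, C1Close P Q ε ∧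
    ∃ p : E, ∃ T : ℝ, 0 < T ∧ Q.φ T p = p ∧ Q.X p ≠ 0 ∧ dist p x < ε

/-- Axiom A: the nonwandering set is hyperbolic and is the closure of the set of
critical elements -/
def FlowPkg.AxiomA (P : FlowPkg E) : Prop :=
  Nonempty (HyperbolicSet P P.NonWandering) ∧
  P.NonWandering =
    closure ({σ : E | P.X σ = 0} ∪ {p : E | ∃ T > (0:ℝ), P.φ T p = p ∧ P.X p ≠ 0})

/-- the no-cycle condition, formulated (as is equivalent for Axiom A flows) as the
coincidence of the chain recurrent set with the nonwandering set -/
def FlowPkg.NoCycle (P : FlowPkg E) : Prop := P.CR = P.NonWandering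

/-- a continuous family of local strong stable disks over `Λ`, invariant and
uniformly contracted at time `T` -/
structure StrongStableFamily (P : FlowPkg E) (Λ : Set E) (T η : ℝ) where
  hT : 0 < T
  hη0 : 0 < η
  hη1 : η < 1
  Wloc : E → Set E
  mem_self : ∀ x ∈ Λ, x ∈ Wloc x
  inv : ∀ x ∈ Λ, P.φ T '' Wloc x ⊆ Wloc (P.φ T x)
  contr : ∀ x ∈ Λ, ∀ y ∈ Wloc x, dist (P.φ T y) (P.φ T x) ≤ η * dist y x

/-- the global strong stable manifold through `x` -/
def StrongStableFamily.Wss {P : FlowPkg E} {Λ : Set E} {T η : ℝ}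
    (F : StrongStableFamily P Λ T η) (x : E) : Set E :=
  ⋃ n : ℕ, P.φ (-(((n : ℝ) + 1) * T)) '' F.Wloc (P.φ (((n : ℝ) + 1) * T) x)

/-- a positively Lorenz-like hyperbolic singularity: splitting `Ess ⊕ Ec ⊕ Eu`
with `dim Ec = 1`, rates `lamss < lams < 0 < lamu` and positive saddle value
`lams + lamu > 0` -/
structure PosLorenzLike (P : FlowPkg E) (σ : E) where
  zero : P.X σ = 0
  Ess : Submodule ℝ E
  Ec : Submodule ℝ E
  Eu : Submodule ℝ E
  dimc : Module.finrank ℝ Ec = 1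
  compl : Ess ⊔ Ec ⊔ Eu = ⊤
  indep1 : Ess ⊓ (Ec ⊔ Eu) = ⊥
  indep2 : Ec ⊓ Eu = ⊥
  invss : ∀ t : ℝ, ∀ v ∈ Ess, P.Dφ t σ v ∈ Ess
  invc : ∀ t : ℝ, ∀ v ∈ Ec, P.Dφ t σ v ∈ Ec
  invu : ∀ t : ℝ, ∀ v ∈ Eu, P.Dφ t σ v ∈ Eu
  C : ℝ
  lamss : ℝ
  lams : ℝ
  lamu : ℝ
  hC : 1 ≤ C
  hss : lamss < lams
  hs : lams < 0
  hu : 0 < lamu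
  saddle : 0 < lams + lamu
  contr_ss : ∀ t ≥ (0:ℝ), ∀ v ∈ Ess, ‖P.Dφ t σ v‖ ≤ C * Real.exp (lamss * t) * ‖v‖
  contr_c : ∀ t ≥ (0:ℝ), ∀ v ∈ Ec, ‖P.Dφ t σ v‖ ≤ C * Real.exp (lams * t) * ‖v‖
  lower_c : ∀ t ≥ (0:ℝ), ∀ v ∈ Ec, ‖v‖ ≤ C * Real.exp (-lams * t) * ‖P.Dφ t σ v‖
  expand_u : ∀ t ≥ (0:ℝ), ∀ v ∈ Eu, ‖P.Dφ (-t) σ v‖ ≤ C * Real.exp (-lamu * t) * ‖v‖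

/-- multisingular hyperbolicity (Bonatti–da Luz): dominated splitting of the
normal bundle over the compact lifted set `B ⊂ SM` for the extended linear
Poincaré flow, with reparametrizing cocycles `h σ` making the two subbundles
uniformly contracted/expanded -/
structure MultiSingHyp (P : FlowPkg E) (Λ : Set E) where
  singHyp : ∀ σ ∈ Λ, P.X σ = 0 → Nonempty (HypSing P σ)
  B : Set (E × E)
  hBcompact : IsCompact B
  hBunit : ∀ p ∈ B, ‖p.2‖ = 1
  hBinv : ∀ t : ℝ, ∀ p ∈ B, P.phiSharp t p ∈ B
  hBflow : ∀ x ∈ Λ, P.X x ≠ 0 → (x, nrm (P.X x)) ∈ B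
  hBbase : ∀ p ∈ B, p.1 ∈ Λ
  Δs : E × E → Submodule ℝ E
  Δu : E × E → Submodule ℝ E
  perp : ∀ p ∈ B, (∀ v ∈ Δs p, ⟪v, p.2⟫ = 0) ∧ (∀ v ∈ Δu p, ⟪v, p.2⟫ = 0)
  span : ∀ p ∈ B, Δs p ⊔ Δu p ⊔ Submodule.span ℝ {p.2} = ⊤
  indep : ∀ p ∈ B, Δs p ⊓ Δu p = ⊥
  invs : ∀ t : ℝ, ∀ p ∈ B, ∀ v ∈ Δs p, P.psiE t p v ∈ Δs (P.phiSharp t p)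
  invu : ∀ t : ℝ, ∀ p ∈ B, ∀ v ∈ Δu p, P.psiE t p v ∈ Δu (P.phiSharp t p)
  idx : ℕ
  hidx : ∀ p ∈ B, Module.finrank ℝ (Δs p) = idx
  Cdom : ℝ
  lamdom : ℝ
  hCdom : 1 ≤ Cdom
  hlamdom : 0 < lamdom
  dom : ∀ t ≥ (0:ℝ), ∀ p ∈ B, ∀ u ∈ Δs p, ∀ v ∈ Δu (P.phiSharp t p),
    ‖P.psiE t p u‖ * ‖P.psiE (-t) (P.phiSharp t p) v‖ ≤
      Cdom * Real.exp (-lamdom * t) * (‖u‖ * ‖v‖)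
  Splus : Finset E
  Sminus : Finset E
  hSp : ↑Splus ⊆ {σ ∈ Λ | P.X σ = 0}
  hSm : ↑Sminus ⊆ {σ ∈ Λ | P.X σ = 0}
  h : E → E × E → ℝ → ℝ
  hpos : ∀ σ p t, 0 < h σ p t
  hcoc : ∀ σ : E, (σ ∈ Splus ∨ σ ∈ Sminus) → ∀ p ∈ B, ∀ t s : ℝ,
    h σ p (t + s) = h σ p t * h σ (P.phiSharp t p) s
  C : ℝ
  lam : ℝ
  hC : 1 ≤ C
  hlam : 0 < lam
  contr_s : ∀ t ≥ (0:ℝ), ∀ p ∈ B, ∀ v ∈ Δs p,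
    (∏ σ ∈ Splus, h σ p t) * ‖P.psiE t p v‖ ≤ C * Real.exp (-lam * t) * ‖v‖
  contr_u : ∀ t ≥ (0:ℝ), ∀ p ∈ B, ∀ v ∈ Δu p,
    (∏ σ ∈ Sminus, h σ p (-t)) * ‖P.psiE (-t) p v‖ ≤ C * Real.exp (-lam * t) * ‖v‖

/-!
In an adapted norm around `σ`, the time-one map `φ₁` contracts the stable directions and expands
the unstable ones, so an orbit of `φ₁` (or of `φ₋₁`) that stays close to `σ` converges to `σ`.
If all points of `Λ` near `σ` stayed near `σ` under `φ₋₁`, backward contraction would keep every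
fine pseudo orbit of `Λ` ending at `σ` inside a small ball around `σ`; chain transitivity from a
point `y ≠ σ` of `Λ` rules this out. So points of `Λ` arbitrarily close to `σ` leave a fixed ball
under `φ₋₁`, and a limit of their exit points is a point of `Λ ∖ {σ}` whose forward orbit stays
near `σ`, i.e. a point of `W^s(σ)`. For `W^u(σ)` the same argument runs for `φ₋₁`, with the pseudo
orbits from `σ` to the orbit of `y` reversed.
-/

open Filter Topology Function Set Relation

section Chains

variable {X : Type*} [PseudoMetricSpace X]

def ChainStep (f : X → X) (Λ : Set X) (η : ℝ) (x y : X) : Prop :=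
  x ∈ Λ ∧ y ∈ Λ ∧ dist (f x) y < η

theorem ChainStep.reflTransGen_of_dist_iterate_lt {f : X → X} {Λ : Set X} (hf : MapsTo f Λ Λ)
    {η : ℝ} (hη : 0 < η) {x y : X} (hx : x ∈ Λ) (hy : y ∈ Λ) {m : ℕ}
    (h : dist (f^[m + 1] x) y < η) : ReflTransGen (ChainStep f Λ η) x y := by
  induction m generalizing x with
  | zero => exact .single ⟨hx, hy, h⟩
  | succ m ih =>
    exact .head ⟨hx, hf hx, by simpa using hη⟩ (ih (hf hx) (by rwa [iterate_succ_apply] at h))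

theorem ChainStep.exists_reflTransGen_symm {f : X ≃ₜ X} {Λ : Set X} (hΛ : IsCompact Λ)
    (hf : MapsTo f Λ Λ) {η : ℝ} (hη : 0 < η) :
    ∃ η' > 0, ∀ {a b : X}, ReflTransGen (ChainStep f Λ η') a b →
      ReflTransGen (ChainStep f.symm Λ η) b a := by
  obtain ⟨η', hη', hunif⟩ := Metric.uniformContinuousOn_iff.mp
    (hΛ.uniformContinuousOn_of_continuous f.symm.continuous.continuousOn) η hη
  refine ⟨η', hη', fun h => ReflTransGen.mono (fun x y ⟨hy, hx, hxy⟩ => ⟨hx, hy, ?_⟩) _ _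
    (reflTransGen_swap.mpr h)⟩
  simpa [dist_comm] using hunif _ (hf hy) _ hx hxy

end Chains

section LocalHyperbolicity

variable {E : Type*} [NormedAddCommGroup E] [NormedSpace ℝ E]

/-- The Lyapunov seminorm `x ↦ sup_n e^{λn} ‖Aⁿ (π x)‖`, with `π` the projection onto `V`
along `W`, is contracted by `A` in a single step. -/
theorem exists_adapted_seminorm [FiniteDimensional ℝ E] {A : E →L[ℝ] E} {V W : Submodule ℝ E}
    (hVW : IsCompl V W) (hAV : ∀ v ∈ V, A v ∈ V) (hAW : ∀ w ∈ W, A w ∈ W) {K lam : ℝ}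
    (hA : ∀ n : ℕ, ∀ v ∈ V, ‖(A ^ n) v‖ ≤ K * Real.exp (-lam * n) * ‖v‖) :
    ∃ p : Seminorm ℝ E, (∀ x, p (A x) ≤ Real.exp (-lam) * p x) ∧
      (∀ v ∈ V, ∀ w ∈ W, ‖v‖ ≤ p (v + w)) ∧ ∃ C, ∀ x, p x ≤ C * ‖x‖ := by
  set π : E →L[ℝ] E := LinearMap.toContinuousLinearMap (V.projection W hVW)
  have hπV : ∀ x, π x ∈ V := Submodule.projection_apply_mem hVW
  have hπA : ∀ x, π (A x) = A (π x) := by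
    intro x
    change V.projection W hVW (A x) = A (V.projection W hVW x)
    conv_lhs => rw [← Submodule.projection_add_projection_eq_self hVW x, map_add, map_add]
    rw [Submodule.projection_apply_of_mem_right hVW (hAW _ (Submodule.projection_apply_mem _ _)),
      add_zero, Submodule.projection_apply_of_mem_left hVW
        (hAV _ (Submodule.projection_apply_mem _ _))]
  set q : ℕ → Seminorm ℝ E :=
    fun n => (normSeminorm ℝ E).comp (Real.exp (lam * n) • (A ^ n * π)).toLinearMap
  have hq : ∀ n x, q n x = Real.exp (lam * n) * ‖(A ^ n) (π x)‖ := fun n x => by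
    simp only [q, Seminorm.comp_apply, coe_normSeminorm, ContinuousLinearMap.coe_coe,
      smul_apply, mul_apply_eq_comp, norm_smul, Real.norm_eq_abs,
      abs_of_pos (Real.exp_pos _)]
  have hq_le : ∀ n x, q n x ≤ K * ‖π x‖ := fun n x => by
    rw [hq]
    calc Real.exp (lam * n) * ‖(A ^ n) (π x)‖
        ≤ Real.exp (lam * n) * (K * Real.exp (-lam * n) * ‖π x‖) := by
          gcongr; exact hA n _ (hπV x)
      _ = K * ‖π x‖ := by
          rw [show Real.exp (lam * n) * (K * Real.exp (-lam * n) * ‖π x‖) =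
            K * (Real.exp (lam * n) * Real.exp (-lam * n)) * ‖π x‖ by ring, ← Real.exp_add]
          simp
  have hbdd : ∀ x, BddAbove (range fun n => q n x) := fun x => ⟨K * ‖π x‖, by
    rintro _ ⟨n, rfl⟩; exact hq_le n x⟩
  have hp : ∀ x, (⨆ n, q n) x = ⨆ n, q n x := fun x =>
    Seminorm.iSup_apply (Seminorm.bddAbove_range_iff.2 hbdd)
  refine ⟨⨆ n, q n, fun x => ?_, fun v hv w hw => ?_, |K| * ‖π‖, fun x => ?_⟩
  · rw [hp, hp]
    refine ciSup_le fun n => ?_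
    calc q n (A x) = Real.exp (-lam) * q (n + 1) x := by
          rw [hq, hq, hπA, ← mul_apply_eq_comp, ← pow_succ, ← mul_assoc, ← Real.exp_add]
          push_cast; ring_nf
      _ ≤ Real.exp (-lam) * ⨆ n, q n x := by gcongr; exact le_ciSup (hbdd x) (n + 1)
  · rw [hp]
    refine le_ciSup_of_le (hbdd _) 0 ?_
    have hπv : π v = v := Submodule.projection_apply_of_mem_left hVW hv
    have hπw : π w = 0 := Submodule.projection_apply_of_mem_right hVW hw
    simp [hq, hπv, hπw]
  · rw [hp]
    refine ciSup_le fun n => (hq_le n x).trans ?_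
    calc K * ‖π x‖ ≤ |K| * (‖π‖ * ‖x‖) := by gcongr; exacts [le_abs_self K, π.le_opNorm x]
      _ = |K| * ‖π‖ * ‖x‖ := by ring

theorem HasFDerivAt.exists_seminorm_remainder_le {f : E → E} {A : E →L[ℝ] E} {σ : E}
    (hf : HasFDerivAt f A σ) (hσ : f σ = σ) {N : Seminorm ℝ E} {C : ℝ} (hC : 0 < C)
    (hN : ∀ h, ‖h‖ ≤ C * N h) (hN' : ∀ h, N h ≤ C * ‖h‖) {ε : ℝ} (hε : 0 < ε) :
    ∃ δ > 0, ∀ x, N (x - σ) ≤ δ → N (f x - σ - A (x - σ)) ≤ ε * N (x - σ) := by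
  obtain ⟨ρ, hρ, hball⟩ := Metric.eventually_nhds_iff.mp
    (hf.isLittleO.def (c := ε / C ^ 2) (by positivity))
  refine ⟨ρ / (2 * C), by positivity, fun x hx => ?_⟩
  have hxσ : ‖x - σ‖ ≤ C * N (x - σ) := hN _
  have hxρ : dist x σ < ρ := by
    rw [dist_eq_norm]
    calc ‖x - σ‖ ≤ C * (ρ / (2 * C)) := hxσ.trans (by gcongr)
      _ < ρ := by field_simp; linarith
  calc N (f x - σ - A (x - σ)) ≤ C * (ε / C ^ 2 * (C * N (x - σ))) := by
        refine (hN' _).trans ?_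
        gcongr
        simpa [hσ] using (hball hxρ).trans (by gcongr)
    _ = ε * N (x - σ) := by field_simp

structure ConeCondition (f : E → E) (σ : E) (NS NU : Seminorm ℝ E) (a b ε δ : ℝ) : Prop where
  stable : ∀ x, (NS ⊔ NU) (x - σ) ≤ δ →
    NS (f x - σ) ≤ a * NS (x - σ) + ε * (NS ⊔ NU) (x - σ)
  unstable : ∀ x, (NS ⊔ NU) (x - σ) ≤ δ →
    b * NU (x - σ) - ε * (NS ⊔ NU) (x - σ) ≤ NU (f x - σ)

namespace ConeCondition

variable {f : E → E} {σ : E} {NS NU : Seminorm ℝ E} {a b ε δ : ℝ}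

theorem of_linear {A : E →L[ℝ] E} (hS : ∀ h, NS (A h) ≤ a * NS h)
    (hU : ∀ h, b * NU h ≤ NU (A h))
    (hrem : ∀ x, (NS ⊔ NU) (x - σ) ≤ δ →
      (NS ⊔ NU) (f x - σ - A (x - σ)) ≤ ε * (NS ⊔ NU) (x - σ)) :
    ConeCondition f σ NS NU a b ε δ where
  stable x hx := by
    have hr := (le_max_left _ _).trans ((Seminorm.sup_apply NS NU _).symm.le.trans (hrem x hx))
    calc NS (f x - σ) = NS (A (x - σ) + (f x - σ - A (x - σ))) := by abel_nf
      _ ≤ a * NS (x - σ) + ε * (NS ⊔ NU) (x - σ) :=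
          (map_add_le_add _ _ _).trans (add_le_add (hS _) hr)
  unstable x hx := by
    have hr := (le_max_right _ _).trans ((Seminorm.sup_apply NS NU _).symm.le.trans (hrem x hx))
    have : NU (A (x - σ)) ≤ NU (f x - σ) + NU (f x - σ - A (x - σ)) := by
      simpa using map_sub_le_add NU (f x - σ) (f x - σ - A (x - σ))
    linarith [hU (x - σ)]

theorem unstable_step (hf : ConeCondition f σ NS NU a b ε δ) (ha : 0 ≤ a) (hab : a + ε < b - ε)
    {x : E} (hx : (NS ⊔ NU) (x - σ) ≤ δ) (hSU : NS (x - σ) < NU (x - σ)) :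
    (b - ε) * NU (x - σ) ≤ NU (f x - σ) ∧ NS (f x - σ) < NU (f x - σ) := by
  have hN : (NS ⊔ NU) (x - σ) = NU (x - σ) := by rw [Seminorm.sup_apply, max_eq_right hSU.le]
  have hU := hf.unstable x hx
  have hS := hf.stable x hx
  rw [hN] at hU hS
  have hpos : 0 < NU (x - σ) := (apply_nonneg _ _).trans_lt hSU
  refine ⟨by linarith, ?_⟩
  nlinarith [mul_le_mul_of_nonneg_left hSU.le ha]

/-- In the unstable cone `NU` grows by the factor `b - ε > 1`, so a confined orbit never
enters it. -/
theorem unstable_le_stable (hf : ConeCondition f σ NS NU a b ε δ) (ha : 0 ≤ a) (hab : a + ε < 1)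
    (hb : 1 < b - ε) {z : E} (hz : ∀ n, (NS ⊔ NU) (f^[n] z - σ) ≤ δ) (n : ℕ) :
    NU (f^[n] z - σ) ≤ NS (f^[n] z - σ) := by
  by_contra! hn
  have hgrow : ∀ k, NS (f^[n + k] z - σ) < NU (f^[n + k] z - σ) ∧
      (b - ε) ^ k * NU (f^[n] z - σ) ≤ NU (f^[n + k] z - σ) := by
    intro k
    induction k with
    | zero => simpa using hn
    | succ k ih =>
      obtain ⟨h1, h2⟩ := hf.unstable_step ha (by linarith) (hz _) ih.1
      rw [← add_assoc, iterate_succ_apply']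
      refine ⟨h2, ?_⟩
      calc (b - ε) ^ (k + 1) * NU (f^[n] z - σ) = (b - ε) * ((b - ε) ^ k * NU (f^[n] z - σ)) := by
            ring
        _ ≤ _ := (mul_le_mul_of_nonneg_left ih.2 (by linarith)).trans h1
  have hpos : 0 < NU (f^[n] z - σ) := (apply_nonneg _ _).trans_lt hn
  obtain ⟨k, hk⟩ := pow_unbounded_of_one_lt (δ / NU (f^[n] z - σ)) hb
  rw [div_lt_iff₀ hpos] at hk
  have := (hgrow k).2.trans ((le_max_right _ _).trans ((Seminorm.sup_apply NS NU _).symm.le.trans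
    (hz (n + k))))
  linarith

/-- Orbits confined to the `δ`-ball stay in the stable cone, where `f` contracts at rate
`a + ε`. -/
theorem le_pow_mul (hf : ConeCondition f σ NS NU a b ε δ) (ha : 0 ≤ a) (hε : 0 ≤ ε)
    (hab : a + ε < 1) (hb : 1 < b - ε) {z : E} (hz : ∀ n, (NS ⊔ NU) (f^[n] z - σ) ≤ δ) (n : ℕ) :
    (NS ⊔ NU) (f^[n] z - σ) ≤ (a + ε) ^ n * (NS ⊔ NU) (z - σ) := by
  induction n with
  | zero => simp
  | succ n ih =>
    have hS : NS (f^[n] z - σ) ≤ (NS ⊔ NU) (f^[n] z - σ) := by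
      rw [Seminorm.sup_apply]; exact le_max_left _ _
    calc (NS ⊔ NU) (f^[n + 1] z - σ) = NS (f (f^[n] z) - σ) := by
          rw [Seminorm.sup_apply, max_eq_left (hf.unstable_le_stable ha hab hb hz (n + 1)),
            iterate_succ_apply']
      _ ≤ (a + ε) * (NS ⊔ NU) (f^[n] z - σ) := by
          have := hf.stable _ (hz n)
          nlinarith
      _ ≤ (a + ε) * ((a + ε) ^ n * (NS ⊔ NU) (z - σ)) := by gcongr
      _ = (a + ε) ^ (n + 1) * (NS ⊔ NU) (z - σ) := by ring

end ConeCondition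

/-- An adapted norm `N` at a fixed point `σ` of `f`, in which the orbits of `f` and of `f⁻¹`
that stay in the `δ`-ball around `σ` converge to `σ` at rate `ν`. -/
structure HyperbolicChart (f : E ≃ₜ E) (σ : E) where
  N : Seminorm ℝ E
  C : ℝ
  δ : ℝ
  ν : ℝ
  map_fixed : f σ = σ
  C_pos : 0 < C
  norm_le : ∀ h, ‖h‖ ≤ C * N h
  le_norm : ∀ h, N h ≤ C * ‖h‖
  δ_pos : 0 < δ
  ν_nonneg : 0 ≤ ν
  ν_lt_one : ν < 1
  forward : ∀ z, (∀ n, N (f^[n] z - σ) ≤ δ) → ∀ n, N (f^[n] z - σ) ≤ ν ^ n * N (z - σ)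
  backward : ∀ z, (∀ n, N (f.symm^[n] z - σ) ≤ δ) →
    ∀ n, N (f.symm^[n] z - σ) ≤ ν ^ n * N (z - σ)

namespace HyperbolicChart

variable {f : E ≃ₜ E} {σ : E} (H : HyperbolicChart f σ)

def symm : HyperbolicChart f.symm σ :=
  { H with
    map_fixed := by rw [Homeomorph.symm_apply_eq, H.map_fixed]
    forward := H.backward
    backward := H.forward }

theorem continuous_N : Continuous H.N := by
  refine (LipschitzWith.of_dist_le_mul fun a b => ?_).continuous (K := H.C.toNNReal)
  rw [Real.dist_eq, dist_eq_norm, Real.coe_toNNReal _ H.C_pos.le]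
  exact (abs_sub_map_le_sub H.N a b).trans (H.le_norm _)

theorem symm_iterate_fixed (H : HyperbolicChart f σ) (n : ℕ) : f.symm^[n] σ = σ :=
  iterate_fixed H.symm.map_fixed n

theorem tendsto_of_forall_le {z : E} (hz : ∀ n, H.N (f^[n] z - σ) ≤ H.δ) :
    Tendsto (fun n => f^[n] z) atTop (𝓝 σ) := by
  rw [tendsto_iff_norm_sub_tendsto_zero]
  refine squeeze_zero (fun n => norm_nonneg _) (fun n => (H.norm_le _).trans
    (mul_le_mul_of_nonneg_left (H.forward z hz n) H.C_pos.le)) ?_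
  simpa using ((tendsto_pow_atTop_nhds_zero_of_lt_one H.ν_nonneg H.ν_lt_one).mul_const
    (H.N (z - σ))).const_mul H.C

/-- The `ν`-contraction of `f⁻¹` near `σ` absorbs the jump of size `(1 - ν) c`. -/
theorem le_of_chainStep {Λ : Set E} (hfΛ : MapsTo f Λ Λ) {ρ c η : ℝ}
    (htrap : ∀ z ∈ Λ, H.N (z - σ) ≤ ρ → ∀ n, H.N (f.symm^[n] z - σ) ≤ H.δ)
    (hc : 0 ≤ c) (hcρ : 2 * c ≤ ρ) (hη : H.C * η ≤ (1 - H.ν) * c) {x y : E}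
    (hxy : ChainStep f Λ η x y) (hy : H.N (y - σ) ≤ c) : H.N (x - σ) ≤ c := by
  obtain ⟨hx, -, hdist⟩ := hxy
  have hjump : H.N (f x - y) ≤ (1 - H.ν) * c :=
    (H.le_norm _).trans (le_trans (by rw [← dist_eq_norm]; gcongr; exact H.C_pos.le) hη)
  have hfx : H.N (f x - σ) ≤ (2 - H.ν) * c := by
    calc H.N (f x - σ) = H.N ((f x - y) + (y - σ)) := by rw [sub_add_sub_cancel]
      _ ≤ (1 - H.ν) * c + c := (map_add_le_add _ _ _).trans (add_le_add hjump hy)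
      _ = (2 - H.ν) * c := by ring
  have hback := H.backward (f x) (htrap _ (hfΛ hx) (hfx.trans (by nlinarith [H.ν_nonneg]))) 1
  rw [pow_one, iterate_one, Homeomorph.symm_apply_apply] at hback
  calc H.N (x - σ) ≤ H.ν * ((2 - H.ν) * c) := hback.trans (by gcongr; exact H.ν_nonneg)
    _ ≤ c := by nlinarith [sq_nonneg (1 - H.ν)]

/-- `q` is a limit of exit points; the exit times tend to infinity because `f⁻¹` is continuous
at its fixed point `σ`. -/
theorem exists_forward_trapped {Λ : Set E} (hΛ : IsCompact Λ) (hgΛ : MapsTo f.symm Λ Λ)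
    (hesc : ∀ ρ > 0, ∃ z ∈ Λ, H.N (z - σ) ≤ ρ ∧ ∃ n, H.δ < H.N (f.symm^[n] z - σ)) :
    ∃ q ∈ Λ, H.δ ≤ H.N (q - σ) ∧ ∀ n, H.N (f^[n + 1] q - σ) ≤ H.δ := by
  classical
  choose z hzΛ hzN hesc using fun j : ℕ => hesc (1 / (j + 1)) (by positivity)
  set l := fun j => Nat.find (hesc j)
  have hl : ∀ j, H.δ < H.N (f.symm^[l j] (z j) - σ) := fun j => Nat.find_spec (hesc j)
  have hl_min : ∀ j, ∀ i < l j, H.N (f.symm^[i] (z j) - σ) ≤ H.δ :=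
    fun j i hi => not_lt.1 (Nat.find_min (hesc j) hi)
  obtain ⟨q, hqΛ, ψ, hψ, hlim⟩ := hΛ.tendsto_subseq fun j => hgΛ.iterate (l j) (hzΛ j)
  have hz : Tendsto z atTop (𝓝 σ) := by
    rw [tendsto_iff_norm_sub_tendsto_zero]
    refine squeeze_zero (fun j => norm_nonneg _) (fun j => (H.norm_le _).trans
      (mul_le_mul_of_nonneg_left (hzN j) H.C_pos.le)) ?_
    simpa using tendsto_one_div_add_atTop_nhds_zero_nat.const_mul H.C
  have hcontN : ∀ g : E → E, Continuous g → Continuous fun x => H.N (g x - σ) :=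
    fun g hg => H.continuous_N.comp (hg.sub continuous_const)
  have hl_large : ∀ n, ∀ᶠ j in atTop, n < l (ψ j) := by
    intro n
    have hnear : ∀ᶠ x in 𝓝 σ, ∀ i ∈ Iic n, H.N (f.symm^[i] x - σ) < H.δ := by
      refine (eventually_all_finite (finite_Iic n)).2 fun i _ => ?_
      refine (hcontN _ (f.symm.continuous.iterate i)).continuousAt.eventually_lt
        continuousAt_const ?_
      simpa [H.symm_iterate_fixed] using H.δ_pos
    filter_upwards [(hz.comp hψ.tendsto_atTop) hnear] with j hj
    by_contra! hjn
    exact (hj (l (ψ j)) hjn).not_gt (hl (ψ j))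
  refine ⟨q, hqΛ, ge_of_tendsto ((hcontN id continuous_id).continuousAt.tendsto.comp hlim)
    (Eventually.of_forall fun j => (hl (ψ j)).le), fun n => ?_⟩
  refine le_of_tendsto ((hcontN _ (f.continuous.iterate (n + 1))).continuousAt.tendsto.comp hlim) ?_
  filter_upwards [hl_large n] with j hj
  have hsplit : f.symm^[l (ψ j)] (z (ψ j)) =
      f.symm^[n + 1] (f.symm^[l (ψ j) - (n + 1)] (z (ψ j))) := by
    rw [← iterate_add_apply, Nat.add_sub_cancel' hj]
  simp only [comp_apply]
  rw [hsplit, (LeftInverse.iterate f.apply_symm_apply (n + 1)) _]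
  exact hl_min _ _ (by omega)

/-- Either the points of `Λ` near `σ` stay near `σ` under `f⁻¹`, and then fine pseudo orbits
ending at `σ` cannot start far from `σ`, or some of them escape and `exists_forward_trapped`
applies. -/
theorem exists_ne_tendsto (H : HyperbolicChart f σ) {Λ : Set E} (hΛ : IsCompact Λ)
    (hfΛ : MapsTo f Λ Λ) (hgΛ : MapsTo f.symm Λ Λ) {r : ℝ} (hr : 0 < r)
    (hreach : ∀ η > 0, ∃ a, r ≤ ‖a - σ‖ ∧ ReflTransGen (ChainStep f Λ η) a σ) :
    ∃ q ∈ Λ, q ≠ σ ∧ Tendsto (fun n => f^[n] q) atTop (𝓝 σ) := by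
  by_cases htrap : ∃ ρ > 0, ∀ z ∈ Λ, H.N (z - σ) ≤ ρ → ∀ n, H.N (f.symm^[n] z - σ) ≤ H.δ
  · exfalso
    obtain ⟨ρ, hρ, htrap⟩ := htrap
    set c := min (ρ / 2) (r / (2 * H.C))
    have hc : 0 < c := lt_min (by positivity) (div_pos hr (by linarith [H.C_pos]))
    obtain ⟨a, hra, hchain⟩ := hreach ((1 - H.ν) * c / H.C)
      (div_pos (mul_pos (by linarith [H.ν_lt_one]) hc) H.C_pos)
    have ha : H.N (a - σ) ≤ c := by
      clear hra
      induction hchain using ReflTransGen.head_induction_on with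
      | refl => simpa using hc.le
      | head hstep _ ih =>
        exact H.le_of_chainStep hfΛ htrap hc.le (by linarith [min_le_left (ρ / 2) (r / (2 * H.C))])
          (by rw [mul_div_cancel₀ _ H.C_pos.ne']) hstep ih
    have : r ≤ H.C * c := (hra.trans (H.norm_le _)).trans (by gcongr; exact H.C_pos.le)
    have : H.C * c ≤ r / 2 := by
      calc H.C * c ≤ H.C * (r / (2 * H.C)) := by gcongr; exacts [H.C_pos.le, min_le_right _ _]
        _ = r / 2 := by field_simp [H.C_pos.ne']
    linarith
  · push Not at htrap
    obtain ⟨q, hqΛ, hqδ, hq⟩ := H.exists_forward_trapped hΛ hgΛ htrap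
    refine ⟨q, hqΛ, fun h => by simp [h] at hqδ; linarith [H.δ_pos], ?_⟩
    refine (tendsto_add_atTop_iff_nat 1).1 ?_
    simpa only [iterate_succ_apply] using H.tendsto_of_forall_le (z := f q) fun n => by
      simpa only [iterate_succ_apply] using hq n

end HyperbolicChart

/-- With adapted seminorms in which `A = Df(σ)` contracts `NS` and `B = Df⁻¹(σ)` contracts `NU`,
the cone conditions hold near `σ` for `f` and `f⁻¹` alike. -/
theorem HyperbolicChart.nonempty_of_seminorms {f : E ≃ₜ E} {σ : E} (hσ : f σ = σ)
    {A B : E →L[ℝ] E} (hA : HasFDerivAt f A σ) (hB : HasFDerivAt f.symm B σ)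
    (hAB : ∀ x, A (B x) = x) (hBA : ∀ x, B (A x) = x) {NS NU : Seminorm ℝ E} {μ C : ℝ}
    (hμ0 : 0 < μ) (hμ1 : μ < 1) (hS : ∀ h, NS (A h) ≤ μ * NS h) (hU : ∀ h, NU (B h) ≤ μ * NU h)
    (hC : 0 < C) (hnorm_le : ∀ h, ‖h‖ ≤ C * (NS ⊔ NU) h) (hle_norm : ∀ h, (NS ⊔ NU) h ≤ C * ‖h‖) :
    Nonempty (HyperbolicChart f σ) := by
  have hU_exp : ∀ h, μ⁻¹ * NU h ≤ NU (A h) := fun h => by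
    simpa [hBA, inv_mul_le_iff₀ hμ0] using hU (A h)
  have hS_exp : ∀ h, μ⁻¹ * NS h ≤ NS (B h) := fun h => by
    simpa [hAB, inv_mul_le_iff₀ hμ0] using hS (B h)
  obtain ⟨ε, hεμ⟩ : ∃ ε, ε = (1 - μ) / 2 := ⟨_, rfl⟩
  have hε : 0 < ε := by linarith
  have hab : μ + ε < 1 := by linarith
  have hb : 1 < μ⁻¹ - ε := by
    have : 1 < μ⁻¹ := one_lt_inv₀ hμ0 |>.2 hμ1
    nlinarith [mul_inv_cancel₀ hμ0.ne']
  obtain ⟨δ₁, hδ₁, hrem₁⟩ := hA.exists_seminorm_remainder_le hσ hC hnorm_le hle_norm hε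
  obtain ⟨δ₂, hδ₂, hrem₂⟩ := hB.exists_seminorm_remainder_le
    (by rw [Homeomorph.symm_apply_eq, hσ]) hC hnorm_le hle_norm hε
  have hconeF : ConeCondition f σ NS NU μ μ⁻¹ ε (min δ₁ δ₂) :=
    .of_linear hS hU_exp fun x hx => hrem₁ x (hx.trans (min_le_left _ _))
  have hconeG : ConeCondition f.symm σ NU NS μ μ⁻¹ ε (min δ₁ δ₂) :=
    .of_linear hU hS_exp fun x hx => by
      rw [sup_comm] at hx ⊢; exact hrem₂ x (hx.trans (min_le_right _ _))
  exact ⟨{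
    N := NS ⊔ NU
    C := C
    δ := min δ₁ δ₂
    ν := μ + ε
    map_fixed := hσ
    C_pos := hC
    norm_le := hnorm_le
    le_norm := hle_norm
    δ_pos := lt_min hδ₁ hδ₂
    ν_nonneg := by linarith
    ν_lt_one := hab
    forward := fun z hz => hconeF.le_pow_mul hμ0.le hε.le hab hb hz
    backward := fun z hz n => by
      rw [sup_comm] at hz ⊢
      exact hconeG.le_pow_mul hμ0.le hε.le hab hb hz n }⟩

end LocalHyperbolicity

namespace FlowPkg

variable {E : Type*} [NormedAddCommGroup E] [InnerProductSpace ℝ E] (P : FlowPkg E)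

theorem φ_neg_φ (t : ℝ) (x : E) : P.φ (-t) (P.φ t x) = x := by
  rw [← P.flow_add, neg_add_cancel, P.flow_zero]

theorem φ_φ_neg (t : ℝ) (x : E) : P.φ t (P.φ (-t) x) = x := by
  simpa using P.φ_neg_φ (-t) x

theorem continuous_φ (t : ℝ) : Continuous (P.φ t) :=
  P.contφ.comp (continuous_const.prodMk continuous_id)

def homeomorph (t : ℝ) : E ≃ₜ E where
  toFun := P.φ t
  invFun := P.φ (-t)
  left_inv := P.φ_neg_φ t
  right_inv := P.φ_φ_neg t
  continuous_toFun := P.continuous_φ t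
  continuous_invFun := P.continuous_φ (-t)

theorem iterate_φ (s : ℝ) (n : ℕ) (x : E) : (P.φ s)^[n] x = P.φ (n * s) x := by
  induction n with
  | zero => simp [P.flow_zero]
  | succ n ih => rw [iterate_succ_apply', ih, ← P.flow_add]; push_cast; ring_nf

/-- Near a zero `σ` of `X`, `‖X x‖ = O(‖x - σ‖)`, so by Gronwall the orbit of `σ` cannot move. -/
theorem φ_eq_self_of_X_eq_zero {σ : E} (hσ : P.X σ = 0) (t : ℝ) : P.φ t σ = σ := by
  obtain ⟨K, hK⟩ := (P.deriv_X σ).isBigO_sub.bound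
  have hcont : Continuous fun s => P.φ s σ := P.contφ.comp (continuous_id.prodMk continuous_const)
  have hnear : ∀ᶠ s in 𝓝 (0 : ℝ), ‖P.X (P.φ s σ)‖ ≤ K * ‖P.φ s σ - σ‖ := by
    have := hcont.continuousAt (x := 0) |>.tendsto
    rw [P.flow_zero] at this
    simpa [hσ] using this.eventually hK
  obtain ⟨η, hη, hη'⟩ := Metric.eventually_nhds_iff.mp hnear
  have hpos : ∀ s ∈ Icc 0 (η / 2), P.φ s σ = σ := by
    have := norm_le_gronwallBound_of_norm_deriv_right_le (f := fun s => P.φ s σ - σ)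
      (f' := fun s => P.X (P.φ s σ)) (δ := 0) (K := K) (ε := 0) (a := 0) (b := η / 2)
      (hcont.sub continuous_const).continuousOn
      (fun s _ => ((P.deriv_time s σ).sub_const σ).hasDerivWithinAt) (by simp [P.flow_zero])
      (fun s hs => by
        simpa using hη' (show dist s 0 < η by
          rw [Real.dist_eq, sub_zero, abs_of_nonneg hs.1]; linarith [hs.2]))
    intro s hs
    simpa [gronwallBound_ε0_δ0, sub_eq_zero] using this s hs
  have hsmall : ∀ s, |s| ≤ η / 2 → P.φ s σ = σ := by
    intro s hs
    rcases le_total 0 s with h | h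
    · exact hpos s ⟨h, (le_abs_self s).trans hs⟩
    · calc P.φ s σ = P.φ s (P.φ (-s) σ) := by
            rw [hpos (-s) ⟨neg_nonneg.2 h, (neg_le_abs s).trans hs⟩]
        _ = σ := P.φ_φ_neg s σ
  obtain ⟨n, hn⟩ := exists_nat_gt (|t| / (η / 2))
  have hn0 : (0 : ℝ) < n := lt_of_le_of_lt (by positivity) hn
  have hstep : P.φ (t / n) σ = σ := hsmall _ (by
    rw [abs_div, Nat.abs_cast, div_le_iff₀ hn0]
    rw [div_lt_iff₀ (by positivity)] at hn
    linarith)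
  rw [show t = n * (t / n) by field_simp, ← P.iterate_φ, iterate_fixed hstep]

theorem Dφ_zero (x : E) : P.Dφ 0 x = ContinuousLinearMap.id ℝ E :=
  (P.deriv_space 0 x).unique <| by
    rw [show P.φ 0 = id from funext P.flow_zero]; exact hasFDerivAt_id x

variable {P} {σ : E}

theorem Dφ_add_of_fixed (hσ : ∀ t, P.φ t σ = σ) (s t : ℝ) :
    P.Dφ (s + t) σ = P.Dφ s σ ∘L P.Dφ t σ := by
  refine (P.deriv_space (s + t) σ).unique ?_
  rw [show P.φ (s + t) = P.φ s ∘ P.φ t from funext (P.flow_add s t)]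
  have hs : HasFDerivAt (P.φ s) (P.Dφ s σ) (P.φ t σ) := by rw [hσ t]; exact P.deriv_space s σ
  exact hs.comp σ (P.deriv_space t σ)

theorem Dφ_mul_of_fixed (hσ : ∀ t, P.φ t σ = σ) (n : ℕ) (s : ℝ) :
    P.Dφ (n * s) σ = P.Dφ s σ ^ n := by
  induction n with
  | zero => rw [Nat.cast_zero, zero_mul, pow_zero, Dφ_zero]; rfl
  | succ n ih =>
    rw [pow_succ', ← ih, ContinuousLinearMap.mul_def, ← Dφ_add_of_fixed hσ]
    push_cast; ring_nf

theorem Dφ_apply_Dφ_of_add_eq_zero (hσ : ∀ t, P.φ t σ = σ) {s t : ℝ} (h : s + t = 0) (x : E) :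
    P.Dφ s σ (P.Dφ t σ x) = x := by
  rw [← ContinuousLinearMap.comp_apply, ← Dφ_add_of_fixed hσ, h, Dφ_zero]; rfl

theorem tendsto_φ_mul_of_tendsto_nat (hσ : ∀ t, P.φ t σ = σ) {z : E} (s : ℝ)
    (h : Tendsto (fun n : ℕ => P.φ (n * s) z) atTop (𝓝 σ)) :
    Tendsto (fun t : ℝ => P.φ (t * s) z) atTop (𝓝 σ) := by
  refine fun U hU => mem_map.2 ?_
  have hunif : ∀ᶠ w in 𝓝 σ, ∀ u ∈ Icc (0 : ℝ) 1, P.φ (u * s) w ∈ U :=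
    isCompact_Icc.eventually_forall_of_forall_eventually fun u _ =>
      (P.contφ.comp ((continuous_snd.mul continuous_const).prodMk continuous_fst)).continuousAt
        (x := (σ, u)) |>.preimage_mem_nhds (by simpa [hσ] using hU)
  filter_upwards [(h.comp tendsto_nat_floor_atTop) hunif, eventually_ge_atTop (0 : ℝ)] with t ht ht0
  have hsplit : P.φ (t * s) z = P.φ ((t - ⌊t⌋₊) * s) (P.φ (⌊t⌋₊ * s) z) := by
    rw [← P.flow_add]; ring_nf
  rw [mem_preimage, hsplit]
  exact ht _ ⟨sub_nonneg.2 (Nat.floor_le ht0), by linarith [Nat.lt_floor_add_one t]⟩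

theorem mem_Ws_of_tendsto_iterate (hσ : ∀ t, P.φ t σ = σ) {z : E}
    (h : Tendsto (fun n => (P.φ 1)^[n] z) atTop (𝓝 σ)) : z ∈ P.Ws σ := by
  show Tendsto _ _ _
  simpa using tendsto_φ_mul_of_tendsto_nat hσ 1 (by simpa [P.iterate_φ] using h)

theorem mem_Wu_of_tendsto_iterate (hσ : ∀ t, P.φ t σ = σ) {z : E}
    (h : Tendsto (fun n => (P.φ (-1))^[n] z) atTop (𝓝 σ)) : z ∈ P.Wu σ := by
  have := (tendsto_φ_mul_of_tendsto_nat hσ (-1) (by simpa [P.iterate_φ] using h)).comp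
    tendsto_neg_atBot_atTop
  show Tendsto _ _ _
  simpa [Function.comp_def] using this

theorem NontrivialSet.exists_ne {Λ : Set E} (hnt : P.NontrivialSet Λ) (hσΛ : σ ∈ Λ)
    (hσ : ∀ t, P.φ t σ = σ) : ∃ y ∈ Λ, y ≠ σ := by
  by_contra! h
  refine hnt ⟨σ, Set.ext fun w => ⟨fun hw => ⟨0, by simp [P.flow_zero, h w hw]⟩, ?_⟩⟩
  rintro ⟨t, rfl⟩
  simpa [hσ] using hσΛ

theorem exists_pos_le_norm_φ_sub (hσ : ∀ t, P.φ t σ = σ) {y : E} (hy : y ≠ σ) :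
    ∃ r > 0, ∀ u ∈ Icc (0 : ℝ) 1, r ≤ ‖P.φ u y - σ‖ := by
  have hc : Continuous fun u => ‖P.φ u y - σ‖ :=
    ((P.contφ.comp (continuous_id.prodMk continuous_const)).sub continuous_const).norm
  obtain ⟨u₀, -, hmin⟩ := isCompact_Icc.exists_isMinOn (nonempty_Icc.2 zero_le_one) hc.continuousOn
  refine ⟨_, norm_pos_iff.2 (sub_ne_zero.2 fun h => hy ?_), hmin⟩
  rw [← P.φ_neg_φ u₀ y, h, hσ]

/-- A `δ`-pseudo orbit of the flow becomes a pseudo orbit of the time-one map after moving each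
point forward by less than one unit of time, to the next integer accumulated time. -/
theorem ChainTransitive.exists_reflTransGen {Λ : Set E} (hct : P.ChainTransitive Λ)
    (hΛ : IsCompact Λ) (hinv : P.Invariant Λ) {a b : E} (ha : a ∈ Λ) (hb : b ∈ Λ) {η : ℝ}
    (hη : 0 < η) : ∃ u ∈ Ico (0 : ℝ) 1, ReflTransGen (ChainStep (P.φ 1) Λ η) a (P.φ u b) := by
  obtain ⟨ρ, hρ, hunif⟩ := Metric.uniformContinuousOn_iff.mp
    ((isCompact_Icc.prod hΛ).uniformContinuousOn_of_continuous P.contφ.continuousOn) η hη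
  obtain ⟨n, x, T, -, ⟨hT, hjump⟩, hxΛ, hx0, hxn⟩ := hct a ha b hb ρ hρ
  suffices ∀ i ≤ n, ∃ u ∈ Ico (0 : ℝ) 1, ReflTransGen (ChainStep (P.φ 1) Λ η) a (P.φ u (x i)) by
    simpa [hxn] using this n le_rfl
  intro i
  induction i with
  | zero => exact fun _ => ⟨0, ⟨le_rfl, one_pos⟩, by rw [P.flow_zero, hx0]⟩
  | succ i ih =>
    intro hi
    obtain ⟨u, hu, hchain⟩ := ih (by omega)
    have hTu : 0 < T i - u := by linarith [hT i (by omega), hu.2]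
    set m := ⌈T i - u⌉₊
    have hm : 0 < m := Nat.ceil_pos.2 hTu
    have hu' : (m : ℝ) - (T i - u) ∈ Ico (0 : ℝ) 1 :=
      ⟨sub_nonneg.2 (Nat.le_ceil _), by linarith [Nat.ceil_lt_add_one hTu.le]⟩
    refine ⟨_, hu', hchain.trans (ChainStep.reflTransGen_of_dist_iterate_lt
      (fun y hy => hinv 1 y hy) hη (hinv u _ (hxΛ i (by omega))) (hinv _ _ (hxΛ _ hi))
      (m := m - 1) ?_)⟩
    rw [Nat.sub_add_cancel hm, P.iterate_φ, ← P.flow_add,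
      show (m : ℝ) * 1 + u = (m - (T i - u)) + T i by ring, P.flow_add]
    exact hunif (_, _) ⟨Ico_subset_Icc_self hu', hinv _ _ (hxΛ i (by omega))⟩ (_, _)
      ⟨Ico_subset_Icc_self hu', hxΛ _ hi⟩ (by simpa [Prod.dist_eq] using hjump i (by omega))

end FlowPkg

namespace HypSing

variable {E : Type*} [NormedAddCommGroup E] [InnerProductSpace ℝ E] {P : FlowPkg E} {σ : E}

theorem nonempty_hyperbolicChart [FiniteDimensional ℝ E] (hs : HypSing P σ) :
    Nonempty (HyperbolicChart (P.homeomorph 1) σ) := by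
  have hfix := P.φ_eq_self_of_X_eq_zero hs.zero
  have hpow : ∀ (s : ℝ) (n : ℕ) (v : E), (P.Dφ s σ ^ n) v = P.Dφ (n * s) σ v := fun s n v => by
    rw [FlowPkg.Dφ_mul_of_fixed hfix]
  obtain ⟨NS, hNS, hNS_ge, CS, hCS⟩ := exists_adapted_seminorm hs.compl (hs.invs 1) (hs.invu 1)
    fun n v hv => by rw [hpow, mul_one]; exact hs.contr n n.cast_nonneg v hv
  obtain ⟨NU, hNU, hNU_ge, CU, hCU⟩ := exists_adapted_seminorm hs.compl.symm (hs.invu (-1))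
    (hs.invs (-1)) fun n v hv => by rw [hpow, mul_neg_one]; exact hs.expand n n.cast_nonneg v hv
  set C := max 2 (max CS CU)
  have hnorm_le : ∀ h, ‖h‖ ≤ C * (NS ⊔ NU) h := by
    intro h
    obtain ⟨v, hv, w, hw, rfl⟩ := Submodule.mem_sup.1
      (hs.compl.sup_eq_top ▸ Submodule.mem_top : h ∈ hs.Es ⊔ hs.Eu)
    have hu := hNU_ge w hw v hv
    rw [add_comm w] at hu
    calc ‖v + w‖ ≤ NS (v + w) + NU (v + w) :=
          (norm_add_le _ _).trans (add_le_add (hNS_ge v hv w hw) hu)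
      _ ≤ 2 * (NS ⊔ NU) (v + w) := by
          rw [Seminorm.sup_apply]
          linarith [le_max_left (NS (v + w)) (NU (v + w)), le_max_right (NS (v + w)) (NU (v + w))]
      _ ≤ C * (NS ⊔ NU) (v + w) := by gcongr; exact le_max_left _ _
  have hle_norm : ∀ h, (NS ⊔ NU) h ≤ C * ‖h‖ := by
    intro h
    rw [Seminorm.sup_apply]
    refine max_le ((hCS h).trans ?_) ((hCU h).trans ?_) <;> gcongr
    · exact (le_max_left _ _).trans (le_max_right _ _)
    · exact (le_max_right _ _).trans (le_max_right _ _)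
  have hDφ : ∀ {s t : ℝ}, s + t = 0 → ∀ x, P.Dφ s σ (P.Dφ t σ x) = x :=
    fun h => FlowPkg.Dφ_apply_Dφ_of_add_eq_zero hfix h
  exact HyperbolicChart.nonempty_of_seminorms (hfix 1) (P.deriv_space 1 σ)
    (P.deriv_space (-1) σ) (hDφ (by norm_num)) (hDφ (by norm_num))
    (Real.exp_pos _) (Real.exp_lt_one_iff.2 (by linarith [hs.hlam])) hNS hNU
    (lt_max_of_lt_left two_pos) hnorm_le hle_norm

end HypSing

/-- a nontrivial chain transitive compact invariant set containing a
hyperbolic singularity `σ` meets both `W^s(σ)∖{σ}` and `W^u(σ)∖{σ}`. -/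
theorem stmt0 {E : Type*} [NormedAddCommGroup E] [InnerProductSpace ℝ E]
    [FiniteDimensional ℝ E] (P : FlowPkg E) (Λ : Set E)
    (hΛc : IsCompact Λ) (hinv : P.Invariant Λ)
    (hct : P.ChainTransitive Λ) (hnt : P.NontrivialSet Λ)
    (σ : E) (hσ : σ ∈ Λ) (hs : HypSing P σ) :
    ((P.Ws σ \ {σ}) ∩ Λ).Nonempty ∧ ((P.Wu σ \ {σ}) ∩ Λ).Nonempty := by
  have hfix := P.φ_eq_self_of_X_eq_zero hs.zero
  obtain ⟨H⟩ := hs.nonempty_hyperbolicChart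
  obtain ⟨y, hyΛ, hyσ⟩ := hnt.exists_ne hσ hfix
  have hfΛ : MapsTo (P.homeomorph 1) Λ Λ := fun x hx => hinv 1 x hx
  have hgΛ : MapsTo (P.homeomorph 1).symm Λ Λ := fun x hx => hinv (-1) x hx
  constructor
  · obtain ⟨q, hqΛ, hqσ, hq⟩ := H.exists_ne_tendsto hΛc hfΛ hgΛ
      (norm_pos_iff.2 (sub_ne_zero.2 hyσ)) fun η hη => by
        obtain ⟨u, -, hchain⟩ := hct.exists_reflTransGen hΛc hinv hyΛ hσ hη
        exact ⟨y, le_rfl, by rwa [hfix] at hchain⟩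
    exact ⟨q, ⟨FlowPkg.mem_Ws_of_tendsto_iterate hfix hq, hqσ⟩, hqΛ⟩
  · obtain ⟨r, hr, hry⟩ := P.exists_pos_le_norm_φ_sub hfix hyσ
    obtain ⟨q, hqΛ, hqσ, hq⟩ := H.symm.exists_ne_tendsto hΛc hgΛ hfΛ hr fun η hη => by
      obtain ⟨η', hη', hreverse⟩ := ChainStep.exists_reflTransGen_symm hΛc hfΛ hη
      obtain ⟨u, hu, hchain⟩ := hct.exists_reflTransGen hΛc hinv hσ hyΛ hη'
      exact ⟨P.φ u y, hry u (Ico_subset_Icc_self hu), hreverse hchain⟩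
    exact ⟨q, ⟨FlowPkg.mem_Wu_of_tendsto_iterate hfix hq, hqσ⟩, hqΛ⟩
end

section
/- Let Λ be a positively singular hyperbolic compact invariant set with splitting E^{ss} ⊕ E^{cu}, and suppose dim E^u_σ ≥ dim T_σM − dim E^{ss} − 2 fails in the sense that Ind(σ) ≥ dim E^{ss} + 2 for some singularity σ ∈ Λ. Then one obtains two linearly independent unit vectors u,v ∈ E^s_σ ∩ E^{cu}(σ) with ‖∧²Dφ_t(u∧v)‖ → 0 as t → +∞, contradicting area expansion of E^{cu}; hence Ind(σ) ≤ dim E^{ss} + 1. -/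
/- Common setting: the compact manifold is modelled by a finite-dimensional real
inner product space `E`; a `FlowPkg` packages a `C¹` vector field `X`, its flow `φ`,
the tangent flow `Dφ` and the derivative `DX` of the vector field. -/

open scoped RealInnerProductSpace

variable {E : Type*} [NormedAddCommGroup E] [InnerProductSpace ℝ E] [FiniteDimensional ℝ E]

/-! If `Ind(σ) ≥ dim E^{ss} + 2`, counting dimensions in `T_σM = E^{ss} ⊕ E^{cu}` puts an
orthonormal pair `u, v` in `E^s_σ ∩ E^{cu}(σ)`. Contraction of `E^s_σ` drives the area spanned by
`Dφ_t u, Dφ_t v` to `0`, whereas area expansion of `E^{cu}`, read backwards from `φ_t σ`, gives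
`1 = area u v ≤ C e^{-λt} · area (Dφ_t u) (Dφ_t v)`, so that area cannot tend to `0`. -/

lemma Submodule.finrank_le_finrank_add_finrank_inf_of_isCompl {F : Type*} [AddCommGroup F]
    [Module ℝ F] [FiniteDimensional ℝ F] {A B : Submodule ℝ F} (hAB : IsCompl A B)
    (V : Submodule ℝ F) :
    Module.finrank ℝ V ≤ Module.finrank ℝ A + Module.finrank ℝ (V ⊓ B : Submodule ℝ F) := by
  have hsup := Submodule.finrank_sup_add_finrank_inf_eq V B
  have hcompl := Submodule.finrank_add_eq_of_isCompl hAB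
  have hle := Submodule.finrank_le (V ⊔ B)
  omega

section

variable {F : Type*} [NormedAddCommGroup F] [InnerProductSpace ℝ F]

lemma area_nonneg (u v : F) : 0 ≤ area u v := Real.sqrt_nonneg _

lemma area_le_norm_mul_norm (u v : F) : area u v ≤ ‖u‖ * ‖v‖ := by
  calc area u v ≤ Real.sqrt ((‖u‖ * ‖v‖) ^ 2) :=
        Real.sqrt_le_sqrt (by nlinarith [sq_nonneg ⟪u, v⟫])
    _ = ‖u‖ * ‖v‖ := Real.sqrt_sq (by positivity)

lemma area_eq_one_of_orthonormal {u v : F} (h : Orthonormal ℝ ![u, v]) : area u v = 1 := by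
  have hu : ‖u‖ = 1 := by simpa using h.1 0
  have hv : ‖v‖ = 1 := by simpa using h.1 1
  have huv : ⟪u, v⟫ = 0 := by simpa using h.2 (i := 0) (j := 1) (by decide)
  simp [area, hu, hv, huv]

lemma Submodule.exists_orthonormal_pair_mem (K : Submodule ℝ F) (hK : 2 ≤ Module.finrank ℝ K) :
    ∃ u ∈ K, ∃ v ∈ K, Orthonormal ℝ ![u, v] := by
  have : FiniteDimensional ℝ K := Module.finite_of_finrank_pos (by omega)
  let b := stdOrthonormalBasis ℝ K
  let i : Fin 2 → Fin (Module.finrank ℝ K) := Fin.castLE hK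
  refine ⟨b (i 0), (b (i 0)).2, b (i 1), (b (i 1)).2, ?_⟩
  convert (b.orthonormal.comp_linearIsometry K.subtypeₗᵢ).comp i (Fin.castLE_injective hK)
    using 1
  funext j
  fin_cases j <;> rfl

lemma tendsto_const_mul_exp_neg_mul_atTop (C : ℝ) {lam : ℝ} (hlam : 0 < lam) :
    Filter.Tendsto (fun t : ℝ => C * Real.exp (-lam * t)) Filter.atTop (nhds 0) := by
  simpa using (Real.tendsto_exp_atBot.comp
    (Filter.tendsto_id.const_mul_atTop_of_neg (neg_neg_of_pos hlam))).const_mul C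

lemma FlowPkg.Dφ_neg_apply_Dφ (P : FlowPkg F) (t : ℝ) (x w : F) :
    P.Dφ (-t) (P.φ t x) (P.Dφ t x w) = w := by
  have hcomp : HasFDerivAt (fun y => P.φ (-t) (P.φ t y))
      ((P.Dφ (-t) (P.φ t x)).comp (P.Dφ t x)) x :=
    (P.deriv_space (-t) (P.φ t x)).comp x (P.deriv_space t x)
  have hid : (fun y => P.φ (-t) (P.φ t y)) = id := by
    funext y
    rw [← P.flow_add, neg_add_cancel, P.flow_zero, id]
  rw [hid] at hcomp
  exact congrArg (fun L : F →L[ℝ] F => L w) (hcomp.unique (hasFDerivAt_id x))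

lemma HypSing.tendsto_area_Dφ_atTop {P : FlowPkg F} {σ : F} (hs : HypSing P σ) {u v : F}
    (hu : u ∈ hs.Es) (hv : v ∈ hs.Es) :
    Filter.Tendsto (fun t : ℝ => area (P.Dφ t σ u) (P.Dφ t σ v)) Filter.atTop (nhds 0) := by
  have hbound : ∀ t ≥ (0:ℝ), area (P.Dφ t σ u) (P.Dφ t σ v) ≤
      hs.C * Real.exp (-hs.lam * t) * ‖u‖ * (hs.C * Real.exp (-hs.lam * t) * ‖v‖) :=
    fun t ht => (area_le_norm_mul_norm _ _).trans
      (mul_le_mul (hs.contr t ht u hu) (hs.contr t ht v hv) (norm_nonneg _)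
        (le_trans (norm_nonneg _) (hs.contr t ht u hu)))
  have hlim := ((tendsto_const_mul_exp_neg_mul_atTop hs.C hs.hlam).mul_const ‖u‖).mul
    ((tendsto_const_mul_exp_neg_mul_atTop hs.C hs.hlam).mul_const ‖v‖)
  rw [zero_mul, zero_mul] at hlim
  refine tendsto_of_tendsto_of_tendsto_of_le_of_le' tendsto_const_nhds hlim
    (Filter.Eventually.of_forall fun t => area_nonneg _ _) ?_
  filter_upwards [Filter.eventually_ge_atTop 0] with t ht using hbound t ht

lemma PosSingHyp.area_le_area_Dφ {P : FlowPkg F} {Λ : Set F} (S : PosSingHyp P Λ)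
    (hinv : P.Invariant Λ) {x u v : F} (hx : x ∈ Λ) (hu : u ∈ S.Ecu x) (hv : v ∈ S.Ecu x)
    {t : ℝ} (ht : 0 ≤ t) :
    area u v ≤ S.C * Real.exp (-S.lam * t) * area (P.Dφ t x u) (P.Dφ t x v) := by
  simpa only [P.Dφ_neg_apply_Dφ] using
    S.area_exp t ht (P.φ t x) (hinv t x hx) _ (S.invu t x hx u hu) _ (S.invu t x hx v hv)

lemma PosSingHyp.not_tendsto_area_Dφ_atTop {P : FlowPkg F} {Λ : Set F} (S : PosSingHyp P Λ)
    (hinv : P.Invariant Λ) {x u v : F} (hx : x ∈ Λ) (hu : u ∈ S.Ecu x) (hv : v ∈ S.Ecu x)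
    (huv : 0 < area u v) :
    ¬ Filter.Tendsto (fun t : ℝ => area (P.Dφ t x u) (P.Dφ t x v)) Filter.atTop (nhds 0) := by
  intro hlim
  have hprod := (tendsto_const_mul_exp_neg_mul_atTop S.C S.hlam).mul hlim
  rw [zero_mul] at hprod
  have hle : area u v ≤ 0 := ge_of_tendsto hprod <| by
    filter_upwards [Filter.eventually_ge_atTop 0] with t ht
    exact S.area_le_area_Dφ hinv hx hu hv ht
  linarith

end

theorem stmt3_general {E : Type*} [NormedAddCommGroup E] [InnerProductSpace ℝ E]
    [FiniteDimensional ℝ E] (P : FlowPkg E) (Λ : Set E)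
    (hinv : P.Invariant Λ)
    (S : PosSingHyp P Λ) (σ : E) (hσ : σ ∈ Λ)
    (hs : HypSing P σ) :
    ((Module.finrank ℝ (S.Ess σ) + 2 ≤ Module.finrank ℝ hs.Es) →
      ∃ u v : E, u ∈ hs.Es ⊓ S.Ecu σ ∧ v ∈ hs.Es ⊓ S.Ecu σ ∧
        ‖u‖ = 1 ∧ ‖v‖ = 1 ∧ LinearIndependent ℝ ![u, v] ∧
        Filter.Tendsto (fun t : ℝ => area (P.Dφ t σ u) (P.Dφ t σ v))
          Filter.atTop (nhds 0)) ∧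
    Module.finrank ℝ hs.Es ≤ Module.finrank ℝ (S.Ess σ) + 1 := by
  have hpair : Module.finrank ℝ (S.Ess σ) + 2 ≤ Module.finrank ℝ hs.Es →
      ∃ u ∈ hs.Es ⊓ S.Ecu σ, ∃ v ∈ hs.Es ⊓ S.Ecu σ, Orthonormal ℝ ![u, v] := fun hdim =>
    (hs.Es ⊓ S.Ecu σ).exists_orthonormal_pair_mem <| by
      have := Submodule.finrank_le_finrank_add_finrank_inf_of_isCompl (S.compl σ hσ) hs.Es
      omega
  refine ⟨fun hdim => ?_, ?_⟩
  · obtain ⟨u, hu, v, hv, huv⟩ := hpair hdim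
    exact ⟨u, v, hu, hv, by simpa using huv.1 0, by simpa using huv.1 1, huv.linearIndependent,
      hs.tendsto_area_Dφ_atTop hu.1 hv.1⟩
  · by_contra! hdim
    obtain ⟨u, hu, v, hv, huv⟩ := hpair hdim
    exact S.not_tendsto_area_Dφ_atTop hinv hσ hu.2 hv.2
      (by rw [area_eq_one_of_orthonormal huv]; exact one_pos) (hs.tendsto_area_Dφ_atTop hu.1 hv.1)

/-- if `Ind(σ) ≥ dim E^{ss} + 2` one finds two linearly independent
unit vectors in `E^s_σ ∩ E^{cu}(σ)` whose wedge is contracted in forward time,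
contradicting area expansion; hence `Ind(σ) ≤ dim E^{ss} + 1`. -/
theorem stmt3 {E : Type*} [NormedAddCommGroup E] [InnerProductSpace ℝ E]
    [FiniteDimensional ℝ E] (P : FlowPkg E) (Λ : Set E)
    (hΛc : IsCompact Λ) (hinv : P.Invariant Λ)
    (S : PosSingHyp P Λ) (σ : E) (hσ : σ ∈ Λ) (h0 : P.X σ = 0)
    (hs : HypSing P σ) :
    ((Module.finrank ℝ (S.Ess σ) + 2 ≤ Module.finrank ℝ hs.Es) →
      ∃ u v : E, u ∈ hs.Es ⊓ S.Ecu σ ∧ v ∈ hs.Es ⊓ S.Ecu σ ∧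
        ‖u‖ = 1 ∧ ‖v‖ = 1 ∧ LinearIndependent ℝ ![u, v] ∧
        Filter.Tendsto (fun t : ℝ => area (P.Dφ t σ u) (P.Dφ t σ v))
          Filter.atTop (nhds 0)) ∧
    Module.finrank ℝ hs.Es ≤ Module.finrank ℝ (S.Ess σ) + 1 :=
  stmt3_general P Λ hinv S σ hσ hs
end
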